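/- Let G be a graph of order n ≥ 2 with maximum degree Δ ≥ 3, and suppose G contains the star K_{1,Δ} as an induced subgraph. Then st_D(G) ≤ n − Δ. -/

import Mathlib

open SimpleGraph

/-! In the star `K_{1,m}` with `m ≥ 2` every automorphism fixes the centre and permutes the
leaves arbitrarily, so a labeling is distinguishing exactly when it is injective on the leaves,
and `D(K_{1,m}) = m`. Removing everything outside an induced copy `H` of a graph leaves `H`, so
`st_D(G) ≤ n - |H|` as soon as `D(H) ≠ D(G)`. If `D(G) ≠ Δ`, take `H` the induced `K_{1,Δ}`;
otherwise take `H` a `K_{1,Δ-1}` inside it, which has `Δ ≥ 3` vertices and `D(H) = Δ - 1`. -/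

/-- The distinguishing number of a graph: the least `d` such that there is a vertex
labeling with `d` labels preserved only by the trivial automorphism. -/
noncomputable def distNum {V : Type*} (G : SimpleGraph V) : ℕ :=
  sInf {d : ℕ | ∃ f : V → Fin d, ∀ φ : G ≃g G, (∀ x, f (φ x) = f x) → ∀ x, φ x = x}

/-- The distinguishing stability of a graph: the minimum cardinality of a proper subset
`S` of the vertex set whose removal changes the distinguishing number. -/
noncomputable def stD {V : Type*} (G : SimpleGraph V) : ℕ :=
  sInf {k : ℕ | ∃ S : Set V, S ≠ Set.univ ∧ S.ncard = k ∧
    distNum (G.induce Sᶜ) ≠ distNum G}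

/-- The distinguishing bondage number of a graph: the minimum cardinality of a set
of edges whose removal changes the distinguishing number. -/
noncomputable def bD {V : Type*} (G : SimpleGraph V) : ℕ :=
  sInf {k : ℕ | ∃ F : Set (Sym2 V), F ⊆ G.edgeSet ∧ F.ncard = k ∧
    distNum (G.deleteEdges F) ≠ distNum G}

namespace SimpleGraph

variable {V W V' W' α : Type*}

def IsDistinguishing (G : SimpleGraph V) (f : V → α) : Prop :=
  ∀ φ : G ≃g G, (∀ x, f (φ x) = f x) → ∀ x, φ x = x

theorem IsDistinguishing.comp_iso_symm {G : SimpleGraph V} {H : SimpleGraph W} {f : V → α}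
    (hf : G.IsDistinguishing f) (e : G ≃g H) : H.IsDistinguishing (f ∘ e.symm) := by
  intro φ hφ y
  have hψ : ∀ x, e.symm (φ (e x)) = x := hf ((e.trans φ).trans e.symm) fun x => by
    simpa using hφ (e x)
  simpa using congrArg e (hψ (e.symm y))

def completeBipartiteGraphEmbedding (f : V ↪ V') (g : W ↪ W') :
    completeBipartiteGraph V W ↪g completeBipartiteGraph V' W' where
  toEmbedding := f.sumMap g
  map_rel_iff' := by rintro (a | a) (b | b) <;> simp

theorem completeBipartiteGraph_eq_of_adj_inr [Subsingleton V] {x y : V ⊕ W} {k : W}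
    (hx : (completeBipartiteGraph V W).Adj x (.inr k))
    (hy : (completeBipartiteGraph V W).Adj y (.inr k)) : x = y := by
  rcases x with a | a
  · rcases y with b | b
    · rw [Subsingleton.elim a b]
    · simp at hy
  · simp at hx

theorem completeBipartiteGraph_iso_apply_inl [Subsingleton V] [Nontrivial W]
    (φ : completeBipartiteGraph V W ≃g completeBipartiteGraph V W) (v : V) :
    φ (.inl v) = .inl v := by
  rcases h : φ (.inl v) with a | k
  · rw [Subsingleton.elim a v]
  · obtain ⟨i, j, hij⟩ := exists_pair_ne W
    have hadj : ∀ w, (completeBipartiteGraph V W).Adj (φ (.inr w)) (.inr k) := fun w =>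
      h ▸ φ.map_adj_iff.2 (by simp)
    exact absurd (φ.injective (completeBipartiteGraph_eq_of_adj_inr (hadj i) (hadj j)))
      (by simpa using hij)

theorem isDistinguishing_completeBipartiteGraph_iff [Subsingleton V] [Nontrivial W]
    {f : V ⊕ W → α} :
    (completeBipartiteGraph V W).IsDistinguishing f ↔ Function.Injective (f ∘ Sum.inr) := by
  constructor
  · classical
    intro hf i j hij
    let σ := completeBipartiteGraphCongr (Equiv.refl V) (Equiv.swap i j)
    have hσ : ∀ x, f (σ x) = f x := by
      rintro (a | w)
      · rfl
      · simp only [σ, completeBipartiteGraphCongr_apply, Sum.map_inr]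
        rcases eq_or_ne w i with rfl | hi
        · simpa using hij.symm
        rcases eq_or_ne w j with rfl | hj
        · simpa using hij
        · rw [Equiv.swap_apply_of_ne_of_ne hi hj]
    simpa [σ] using (hf σ hσ (.inr i)).symm
  · intro hf φ hφ
    rintro (v | i)
    · exact completeBipartiteGraph_iso_apply_inl φ v
    rcases h : φ (.inr i) with a | j
    · have := φ.injective (h.trans (completeBipartiteGraph_iso_apply_inl φ a).symm)
      simp at this
    · have := hφ (.inr i)
      rw [h] at this
      exact congrArg _ (hf this)

end SimpleGraph

theorem distNum_eq_sInf {V : Type*} (G : SimpleGraph V) :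
    distNum G = sInf {d | ∃ f : V → Fin d, G.IsDistinguishing f} :=
  rfl

theorem distNum_congr {V W : Type*} {G : SimpleGraph V} {H : SimpleGraph W} (e : G ≃g H) :
    distNum G = distNum H := by
  simp only [distNum_eq_sInf]
  congr 1
  ext d
  exact ⟨fun ⟨f, hf⟩ => ⟨_, hf.comp_iso_symm e⟩, fun ⟨f, hf⟩ => ⟨_, hf.comp_iso_symm e.symm⟩⟩

theorem distNum_completeBipartiteGraph_fin_one {m : ℕ} (hm : 2 ≤ m) :
    distNum (completeBipartiteGraph (Fin 1) (Fin m)) = m := by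
  have : Nontrivial (Fin m) := Fin.nontrivial_iff_two_le.2 hm
  have hmem : m ∈ {d | ∃ f : Fin 1 ⊕ Fin m → Fin d,
      (completeBipartiteGraph (Fin 1) (Fin m)).IsDistinguishing f} :=
    ⟨Sum.elim (fun _ => ⟨0, by omega⟩) id,
      isDistinguishing_completeBipartiteGraph_iff.2 Function.injective_id⟩
  refine le_antisymm (Nat.sInf_le hmem) (le_csInf ⟨m, hmem⟩ ?_)
  rintro d ⟨f, hf⟩
  simpa using Fintype.card_le_of_injective _ (isDistinguishing_completeBipartiteGraph_iff.1 hf)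

theorem stD_le_card_sub_card_of_embedding {V W : Type*} [Fintype V] [Fintype W] [Nonempty W]
    {G : SimpleGraph V} {H : SimpleGraph W} (e : H ↪g G) (hne : distNum H ≠ distNum G) :
    stD G ≤ Fintype.card V - Fintype.card W := by
  refine Nat.sInf_le ⟨(Set.range e)ᶜ, ?_, ?_, ?_⟩
  · exact Set.compl_ne_univ.2 (Set.range_nonempty e)
  · rw [Set.ncard_compl, Set.ncard_range_of_injective e.injective, Nat.card_eq_fintype_card,
      Nat.card_eq_fintype_card]
  · rwa [compl_compl, ← distNum_congr e.isoInduceRange]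

theorem stD_le_card_sub_maxDegree_general {V : Type*} [Fintype V] (G : SimpleGraph V)
    [DecidableRel G.Adj] (hΔ : 3 ≤ G.maxDegree)
    (hstar : Nonempty (completeBipartiteGraph (Fin 1) (Fin G.maxDegree) ↪g G)) :
    stD G ≤ Fintype.card V - G.maxDegree := by
  obtain ⟨e⟩ := hstar
  by_cases hD : distNum G = G.maxDegree
  · let subStar := completeBipartiteGraphEmbedding (.refl (Fin 1))
      (Fin.castLEEmb (Nat.sub_le G.maxDegree 1))
    have h := stD_le_card_sub_card_of_embedding (e.comp subStar)
      (by rw [distNum_completeBipartiteGraph_fin_one (by omega), hD]; omega)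
    simp only [Fintype.card_sum, Fintype.card_fin] at h
    rwa [show 1 + (G.maxDegree - 1) = G.maxDegree by omega] at h
  · have h := stD_le_card_sub_card_of_embedding e
      (by rw [distNum_completeBipartiteGraph_fin_one (by omega)]; exact Ne.symm hD)
    simp only [Fintype.card_sum, Fintype.card_fin] at h
    omega

/-- If $G$ contains an induced star $K_{1,\Delta}$ where $\Delta \ge 3$ is the maximum degree,
then $st_D(G) \le n - \Delta$. -/
theorem stD_le_card_sub_maxDegree {V : Type*} [Fintype V] (G : SimpleGraph V)
    [DecidableRel G.Adj] (hn : 2 ≤ Fintype.card V) (hΔ : 3 ≤ G.maxDegree)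
    (hstar : Nonempty (completeBipartiteGraph (Fin 1) (Fin G.maxDegree) ↪g G)) :
    stD G ≤ Fintype.card V - G.maxDegree :=
  stD_le_card_sub_maxDegree_general G hΔ hstar
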